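/- Let $k$ be a field of characteristic zero, and let $(R, \mathfrak{m})$ be a Noetherian local $k$-algebra with residue field $k$. If $G$ is a torsion group of $k$-algebra automorphisms of $R$, then the natural group homomorphism $G \to \mathrm{Aut}_{k\text{-Vect}}(\mathfrak{m}/\mathfrak{m}^2)$ is injective. -/
import Mathlib

open IsLocalRing

section Aux
variable {k R : Type*} [Field k] [CommRing R] [IsLocalRing R] [Algebra k R]

lemma aux_mem_max (σ : R ≃ₐ[k] R) {x : R} (hx : x ∈ maximalIdeal R) :
    σ x ∈ maximalIdeal R := by
  rw [mem_maximalIdeal, mem_nonunits_iff] at hx ⊢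
  intro hu
  exact hx (by simpa using hu.map σ.symm.toAlgHom)

lemma aux_mem_pow (σ : R ≃ₐ[k] R) (n : ℕ) {x : R} (hx : x ∈ maximalIdeal R ^ n) :
    σ x ∈ maximalIdeal R ^ n := by
  have hmap : Ideal.map (σ : R →+* R) (maximalIdeal R) ≤ maximalIdeal R := by
    rw [Ideal.map_le_iff_le_comap]
    intro y hy
    exact aux_mem_max σ hy
  have : Ideal.map (σ : R →+* R) (maximalIdeal R ^ n) ≤ maximalIdeal R ^ n := by
    rw [Ideal.map_pow]
    exact Ideal.pow_right_mono hmap n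
  exact this (Ideal.mem_map_of_mem _ hx)

lemma aux_delta_pow (g : R ≃ₐ[k] R)
    (hg : ∀ x ∈ maximalIdeal R, g x - x ∈ maximalIdeal R ^ 2) (n : ℕ) :
    ∀ x ∈ maximalIdeal R ^ (n + 1), g x - x ∈ maximalIdeal R ^ (n + 2) := by
  induction n with
  | zero => simpa using hg
  | succ n ih =>
    intro x hx
    rw [pow_succ] at hx
    refine Submodule.mul_induction_on hx ?_ ?_
    · intro a ha b hb
      have key : g (a * b) - a * b = (g a - a) * g b + a * (g b - b) := by
        rw [map_mul]; ring
      rw [key]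
      refine Ideal.add_mem _ ?_ ?_
      · have h1 : (g a - a) * g b ∈ maximalIdeal R ^ (n + 2) * maximalIdeal R :=
          Ideal.mul_mem_mul (ih a ha) (aux_mem_max g hb)
        rw [← pow_succ] at h1; exact h1
      · have h1 : a * (g b - b) ∈ maximalIdeal R ^ (n + 1) * maximalIdeal R ^ 2 :=
          Ideal.mul_mem_mul ha (hg b hb)
        rwa [← pow_add] at h1
    · intro x y hx hy
      have : g (x + y) - (x + y) = (g x - x) + (g y - y) := by rw [map_add]; ring
      rw [this]; exact Ideal.add_mem _ hx hy

end Aux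

/-- For a torsion group `G` of `k`-algebra automorphisms of a Noetherian local `k`-algebra
with residue field `k` (char `k = 0`), the natural map `G → Aut_k(𝔪/𝔪²)` is injective. -/
theorem stmt3 (k R : Type*) [Field k] [CharZero k] [CommRing R] [IsNoetherianRing R]
    [IsLocalRing R] [Algebra k R]
    (hres : Function.Bijective (algebraMap k (IsLocalRing.ResidueField R)))
    (G : Subgroup (R ≃ₐ[k] R)) (hG : ∀ g ∈ G, IsOfFinOrder g)
    (φ ψ : R ≃ₐ[k] R) (hφ : φ ∈ G) (hψ : ψ ∈ G)
    (h : ∀ x ∈ IsLocalRing.maximalIdeal R, φ x - ψ x ∈ IsLocalRing.maximalIdeal R ^ 2) :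
    φ = ψ := by
  set M := maximalIdeal R with hM
  set g : R ≃ₐ[k] R := ψ⁻¹ * φ with hgdef
  have hgG : g ∈ G := G.mul_mem (G.inv_mem hψ) hφ
  have hgx : ∀ x, g x = ψ.symm (φ x) := fun x => rfl
  -- g satisfies the mod 𝔪² triviality
  have hg2 : ∀ x ∈ M, g x - x ∈ M ^ 2 := by
    intro x hx
    have : g x - x = ψ.symm (φ x - ψ x) := by
      rw [map_sub, hgx]; simp
    rw [this]
    exact aux_mem_pow ψ.symm 2 (h x hx)
  -- finite order
  obtain ⟨m, hm, hgm⟩ := (hG g hgG).exists_pow_eq_one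
  -- fact: (g^j) x ≡ x + j•(g x - x) mod 𝔪^{s+2} when g x - x ∈ 𝔪^{s+1}
  have key : ∀ (s : ℕ) (x : R), x ∈ M → g x - x ∈ M ^ (s + 1) →
      ∀ j : ℕ, (g ^ j) x - x - (j : R) * (g x - x) ∈ M ^ (s + 2) := by
    intro s x hx hd j
    induction j with
    | zero => simp [Ideal.zero_mem]
    | succ j ih =>
      have hstep : (g ^ (j + 1)) x = g ((g ^ j) x) := by
        rw [pow_succ']; rfl
      have happ : g ((g ^ j) x - x - (j : R) * (g x - x)) ∈ M ^ (s + 2) :=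
        aux_mem_pow g _ ih
      have hdd : g (g x - x) - (g x - x) ∈ M ^ (s + 2) := aux_delta_pow g hg2 s _ hd
      have hexp : (g ^ (j+1)) x - x - ((j:R)+1) * (g x - x)
          = g ((g ^ j) x - x - (j : R) * (g x - x))
            + (j : R) * (g (g x - x) - (g x - x)) := by
        rw [hstep, map_sub, map_sub, map_mul]
        have : g ((j : R)) = (j : R) := by
          rw [← map_natCast (algebraMap k R) j]
          exact g.commutes _
        rw [this]; ring
      have := Ideal.add_mem _ happ (Ideal.mul_mem_left _ (j : R) hdd)
      rw [← hexp] at this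
      push_cast
      exact this
  -- g is identity on 𝔪
  have hfix : ∀ x ∈ M, g x = x := by
    intro x hx
    by_contra hne
    have hd0 : g x - x ≠ 0 := sub_ne_zero.mpr hne
    have hbot : (⨅ n : ℕ, M ^ n) = ⊥ :=
      Ideal.iInf_pow_eq_bot_of_isLocalRing M (maximalIdeal.isMaximal R).ne_top
    have hnotall : ∃ n, g x - x ∉ M ^ n := by
      by_contra hall
      push_neg at hall
      exact hd0 (by simpa [hbot] using (Submodule.mem_iInf _).mpr hall : g x - x ∈ (⊥ : Ideal R))
    -- all n < n₀ have membership
    classical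
    set n₀ := Nat.find hnotall with hn₀
    have hn₀spec : g x - x ∉ M ^ n₀ := Nat.find_spec hnotall
    have hmemlt : ∀ i < n₀, g x - x ∈ M ^ i := fun i hi => by
      by_contra hc; exact absurd (Nat.find_le hc) (not_le.mpr hi)
    have h2le : 3 ≤ n₀ := by
      by_contra hlt
      push_neg at hlt
      interval_cases n₀ <;>
        exact hn₀spec (Ideal.pow_le_pow_right (by omega) (hg2 x hx))
    obtain ⟨s, hs⟩ : ∃ s, n₀ = s + 2 := ⟨n₀ - 2, by omega⟩
    have hd_in : g x - x ∈ M ^ (s + 1) := hmemlt (s+1) (by omega)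
    have := key s x hx hd_in m
    rw [hgm] at this
    simp only [AlgEquiv.one_apply] at this
    have hmd : (m : R) * (g x - x) ∈ M ^ (s + 2) := by
      have : x - x - (m : R) * (g x - x) ∈ M ^ (s + 2) := this
      simpa using ((M ^ (s+2)).neg_mem this)
    have hinv : g x - x ∈ M ^ (s + 2) := by
      have hminv : (algebraMap k R ((m : k)⁻¹)) * ((m : R) * (g x - x)) = g x - x := by
        rw [← mul_assoc]
        have hmne : (m : k) ≠ 0 := Nat.cast_ne_zero.mpr hm.ne'
        have : (algebraMap k R ((m : k)⁻¹)) * (m : R) = 1 := by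
          rw [show ((m : R) = algebraMap k R (m : k)) by push_cast; simp,
            ← map_mul, inv_mul_cancel₀ hmne, map_one]
        rw [this, one_mul]
      rw [← hminv]
      exact Ideal.mul_mem_left _ _ hmd
    rw [← hs] at hinv
    exact hn₀spec hinv
  -- g is identity everywhere
  have hg1 : g = 1 := by
    ext x
    obtain ⟨c, hc⟩ := hres.2 (residue R x)
    have hxc : x - algebraMap k R c ∈ M := by
      rw [hM, ← Ideal.Quotient.eq_zero_iff_mem]
      show residue R _ = 0
      rw [map_sub]
      have : residue R (algebraMap k R c) = algebraMap k (ResidueField R) c := rfl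
      rw [this, hc, sub_self]
    have := hfix _ hxc
    rw [map_sub] at this
    have hgc : g (algebraMap k R c) = algebraMap k R c := g.commutes c
    rw [hgc] at this
    have : g x = x := by linear_combination this
    simpa using this
  have : ψ⁻¹ * φ = 1 := hg1
  calc φ = ψ * (ψ⁻¹ * φ) := by group
    _ = ψ := by rw [this, mul_one]
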